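/- arXiv:0712.0116 — 11 statements merged into one kernel-verified Lean document; each statement's English description precedes it below -/
import Mathlib

section
/- If A = A₀ ⊕ A₁ is an associative Z₂-algebra over a field of characteristic ≠ 2, 3 (i.e., A₀A₀ ⊆ A₀, A₀A₁ + A₁A₀ ⊆ A₁, A₁A₁ = 0), then the bullet product x • y = ½(x y₀ + y₀ x), where y₀ is the even component of y, is right commutative: x • (y • z) = x • (z • y) for all x, y, z ∈ A. -/
/-- In an associative Z₂-algebra over a field of characteristic ≠ 2, 3,
the bullet product x • y = ½(x y₀ + y₀ x) is right commutative. -/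
theorem stmt_0 {k A : Type*} [Field k] [Ring A] [Algebra k A]
    (h2 : (2 : k) ≠ 0) (h3 : (3 : k) ≠ 0)
    (A0 A1 : Submodule k A) (hcompl : IsCompl A0 A1)
    (p : A →ₗ[k] A) (hp0 : ∀ x, p x ∈ A0) (hp1 : ∀ x, x - p x ∈ A1)
    (h00 : ∀ a ∈ A0, ∀ b ∈ A0, a * b ∈ A0)
    (h01 : ∀ a ∈ A0, ∀ b ∈ A1, a * b ∈ A1)
    (h10 : ∀ a ∈ A1, ∀ b ∈ A0, a * b ∈ A1)
    (h11 : ∀ a ∈ A1, ∀ b ∈ A1, a * b = 0)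
    (bullet : A → A → A)
    (hb : ∀ x y, bullet x y = (1/2 : k) • (x * p y + p y * x)) :
    ∀ x y z : A, bullet x (bullet y z) = bullet x (bullet z y) := by
  -- p picks out the A0-component
  have pchar : ∀ a b : A, a ∈ A0 → b ∈ A1 → p (a + b) = a := by
    intro a b ha hb'
    have hm0 : p (a + b) - a ∈ A0 := sub_mem (hp0 _) ha
    have hm1 : p (a + b) - a ∈ A1 := by
      have := sub_mem hb' (hp1 (a + b))
      have he : b - ((a + b) - p (a + b)) = p (a + b) - a := by abel
      rwa [he] at this
    have := hcompl.disjoint.le_bot ⟨hm0, hm1⟩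
    simpa [sub_eq_zero] using this
  have key : ∀ y z : A, p (bullet y z) = (1/2 : k) • (p y * p z + p z * p y) := by
    intro y z
    have hdecomp : y * p z + p z * y =
        (p y * p z + p z * p y) + ((y - p y) * p z + p z * (y - p y)) := by noncomm_ring
    have h0 : p y * p z + p z * p y ∈ A0 :=
      add_mem (h00 _ (hp0 y) _ (hp0 z)) (h00 _ (hp0 z) _ (hp0 y))
    have h1 : (y - p y) * p z + p z * (y - p y) ∈ A1 :=
      add_mem (h10 _ (hp1 y) _ (hp0 z)) (h01 _ (hp0 z) _ (hp1 y))
    rw [hb, map_smul, hdecomp, pchar _ _ h0 h1]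
  intro x y z
  rw [hb x (bullet y z), hb x (bullet z y), key, key]
  rw [add_comm (p z * p y) (p y * p z)]
end

section
/- If A = A₀ ⊕ A₁ is an associative Z₂-algebra over a field of characteristic ≠ 2, 3, then the bullet product x • y = ½(x y₀ + y₀ x) satisfies the Jordan identity: (y • x) • (x • x) = (y • (x • x)) • x for all x, y ∈ A. -/
theorem stmt_1 {k A : Type*} [Field k] [Ring A] [Algebra k A]
    (h2 : (2 : k) ≠ 0) (h3 : (3 : k) ≠ 0)
    (A0 A1 : Submodule k A) (hcompl : IsCompl A0 A1)
    (p : A →ₗ[k] A) (hp0 : ∀ x, p x ∈ A0) (hp1 : ∀ x, x - p x ∈ A1)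
    (h00 : ∀ a ∈ A0, ∀ b ∈ A0, a * b ∈ A0)
    (h01 : ∀ a ∈ A0, ∀ b ∈ A1, a * b ∈ A1)
    (h10 : ∀ a ∈ A1, ∀ b ∈ A0, a * b ∈ A1)
    (h11 : ∀ a ∈ A1, ∀ b ∈ A1, a * b = 0)
    (bullet : A → A → A)
    (hb : ∀ x y, bullet x y = (1/2 : k) • (x * p y + p y * x)) :
    ∀ x y : A, bullet (bullet y x) (bullet x x) = bullet (bullet y (bullet x x)) x := by
  have key : ∀ a ∈ A0, ∀ b ∈ A1, p (a + b) = a := by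
    intro a ha b hb'
    have hA0 : p (a + b) - a ∈ A0 := A0.sub_mem (hp0 _) ha
    have hA1 : p (a + b) - a ∈ A1 := by
      have hmem : b - ((a + b) - p (a + b)) ∈ A1 := A1.sub_mem hb' (hp1 (a + b))
      have heq : b - ((a + b) - p (a + b)) = p (a + b) - a := by abel
      rwa [heq] at hmem
    have hz : p (a + b) - a ∈ A0 ⊓ A1 := ⟨hA0, hA1⟩
    rw [hcompl.inf_eq_bot] at hz
    exact sub_eq_zero.mp ((Submodule.mem_bot k).mp hz)
  intro x y
  -- p of bullet x x is (p x) * (p x)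
  have hpxx : p (bullet x x) = p x * p x := by
    have hdecomp : bullet x x = p x * p x +
        (1/2 : k) • ((x - p x) * p x + p x * (x - p x)) := by
      rw [hb]
      have : x * p x + p x * x
          = (2 : k) • (p x * p x) + ((x - p x) * p x + p x * (x - p x)) := by
        simp [two_smul, sub_mul, mul_sub]
        abel
      rw [this, smul_add, smul_smul]
      have : (1/2 : k) * 2 = 1 := by field_simp
      rw [this, one_smul]
    rw [hdecomp]
    exact key _ (h00 _ (hp0 x) _ (hp0 x)) _
      (A1.smul_mem _ (A1.add_mem (h10 _ (hp1 x) _ (hp0 x)) (h01 _ (hp0 x) _ (hp1 x))))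
  rw [hb (bullet y x), hb (bullet y (bullet x x)), hpxx, hb y x, hb y (bullet x x), hpxx]
  simp only [smul_add, smul_mul_assoc, mul_smul_comm, add_mul, mul_add, mul_assoc]
  abel
end

section
/- If A = A₀ ⊕ A₁ is an associative Z₂-algebra over a field of characteristic ≠ 2, 3, then the bullet product x • y = ½(x y₀ + y₀ x) satisfies the Hu-Liu identity: x • (y • (x • x)) − (x • y) • (x • x) = 2(x • x) • (y • x) − 2((x • x) • y) • x for all x, y ∈ A. -/
theorem stmt_2 {k A : Type*} [Field k] [Ring A] [Algebra k A]
    (h2 : (2 : k) ≠ 0) (h3 : (3 : k) ≠ 0)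
    (A0 A1 : Submodule k A) (hcompl : IsCompl A0 A1)
    (p : A →ₗ[k] A) (hp0 : ∀ x, p x ∈ A0) (hp1 : ∀ x, x - p x ∈ A1)
    (h00 : ∀ a ∈ A0, ∀ b ∈ A0, a * b ∈ A0)
    (h01 : ∀ a ∈ A0, ∀ b ∈ A1, a * b ∈ A1)
    (h10 : ∀ a ∈ A1, ∀ b ∈ A0, a * b ∈ A1)
    (h11 : ∀ a ∈ A1, ∀ b ∈ A1, a * b = 0)
    (bullet : A → A → A)
    (hb : ∀ x y, bullet x y = (1/2 : k) • (x * p y + p y * x)) :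
    ∀ x y : A, bullet x (bullet y (bullet x x)) - bullet (bullet x y) (bullet x x) =
      (2 : k) • bullet (bullet x x) (bullet y x) - (2 : k) • bullet (bullet (bullet x x) y) x := by
  have hdisj : ∀ a : A, a ∈ A0 → a ∈ A1 → a = 0 := by
    intro a h0 h1
    have := hcompl.disjoint.le_bot (Submodule.mem_inf.mpr ⟨h0, h1⟩)
    simpa using this
  have pfix : ∀ a : A, a ∈ A0 → p a = a := by
    intro a ha
    have h1 : a - p a ∈ A1 := hp1 a
    have h0 : a - p a ∈ A0 := Submodule.sub_mem _ ha (hp0 a)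
    have h := hdisj _ h0 h1
    have := sub_eq_zero.mp h
    exact this.symm
  have pzero : ∀ a : A, a ∈ A1 → p a = 0 := by
    intro a ha
    have h1 : p a ∈ A1 := by
      rw [show p a = a - (a - p a) from (sub_sub_cancel a (p a)).symm]
      exact Submodule.sub_mem _ ha (hp1 a)
    exact hdisj _ (hp0 a) h1
  have pmul : ∀ x y : A, p (x * y) = p x * p y := by
    intro x y
    have hsplit : x * y = p x * p y + (p x * (y - p y) + (x - p x) * p y) := by
      have hz : (x - p x) * (y - p y) = 0 := h11 _ (hp1 x) _ (hp1 y)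
      have : x * y = p x * p y + (p x * (y - p y) + (x - p x) * p y) +
          (x - p x) * (y - p y) := by noncomm_ring
      rw [this, hz, add_zero]
    rw [hsplit, map_add, map_add]
    rw [pfix _ (h00 _ (hp0 x) _ (hp0 y)),
        pzero _ (h01 _ (hp0 x) _ (hp1 y)),
        pzero _ (h10 _ (hp1 x) _ (hp0 y))]
    simp
  intro x y
  have pp : ∀ a : A, p (p a) = p a := fun a => pfix _ (hp0 a)
  simp only [hb, map_smul, map_add, pmul, pp]
  simp only [smul_add, smul_sub, mul_add, add_mul, smul_mul_assoc, mul_smul_comm,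
    smul_smul, mul_assoc]
  match_scalars <;> ring
end

section
/- In a generalized Jordan algebra (J, +, •) over a field k of characteristic ≠ 2, 3, the annihilator J^ann := span_k { x • y − y • x : x, y ∈ J } is an ideal of J, i.e., J^ann • J + J • J^ann ⊆ J^ann. -/
theorem stmt_5 {k J : Type*} [Field k] [AddCommGroup J] [Module k J]
    (h2 : (2 : k) ≠ 0) (h3 : (3 : k) ≠ 0)
    (bullet : J →ₗ[k] J →ₗ[k] J)
    (rc : ∀ x y z : J, bullet x (bullet y z) = bullet x (bullet z y))
    (jid : ∀ x y : J, bullet (bullet y x) (bullet x x) = bullet (bullet y (bullet x x)) x)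
    (hl : ∀ x y : J, bullet x (bullet y (bullet x x)) - bullet (bullet x y) (bullet x x) =
      (2 : k) • bullet (bullet x x) (bullet y x) - (2 : k) • bullet (bullet (bullet x x) y) x)
    (ann : Submodule k J)
    (hann : ann = Submodule.span k {a : J | ∃ x y : J, a = bullet x y - bullet y x}) :
    ∀ a ∈ ann, ∀ j : J, bullet a j ∈ ann ∧ bullet j a ∈ ann := by
  subst hann
  have key : ∀ b ∈ Submodule.span k {a : J | ∃ x y : J, a = bullet x y - bullet y x},
      ∀ j : J, bullet j b = 0 := by
    intro b hb
    induction hb using Submodule.span_induction with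
    | mem x hx =>
      intro j
      obtain ⟨u, v, rfl⟩ := hx
      simp [rc j u v]
    | zero => intro j; simp
    | add x y _ _ hx hy => intro j; simp [hx j, hy j]
    | smul c x _ hx => intro j; simp [hx j]
  intro a ha j
  have h1 : bullet j a = 0 := key a ha j
  constructor
  · have : bullet a j = bullet a j - bullet j a := by rw [h1, sub_zero]
    rw [this]
    exact Submodule.subset_span ⟨a, j, rfl⟩
  · rw [h1]; exact Submodule.zero_mem _
end

section
/- If (J, +, •) is a right unital generalized Jordan algebra with right unit 1, then the annihilator J^ann = span{ x • y − y • x : x, y ∈ J } equals { a ∈ J : 1 • a = 0 }. -/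
theorem stmt_7 {k J : Type*} [Field k] [AddCommGroup J] [Module k J]
    (h2 : (2 : k) ≠ 0) (h3 : (3 : k) ≠ 0)
    (bullet : J →ₗ[k] J →ₗ[k] J)
    (rc : ∀ x y z : J, bullet x (bullet y z) = bullet x (bullet z y))
    (jid : ∀ x y : J, bullet (bullet y x) (bullet x x) = bullet (bullet y (bullet x x)) x)
    (hl : ∀ x y : J, bullet x (bullet y (bullet x x)) - bullet (bullet x y) (bullet x x) =
      (2 : k) • bullet (bullet x x) (bullet y x) - (2 : k) • bullet (bullet (bullet x x) y) x)
    (e : J) (he : ∀ x : J, bullet x e = x)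
    (ann : Submodule k J)
    (hann : ann = Submodule.span k {a : J | ∃ x y : J, a = bullet x y - bullet y x}) :
    ∀ a : J, a ∈ ann ↔ bullet e a = 0 := by
  intro a
  constructor
  · intro ha
    rw [hann] at ha
    have : a ∈ LinearMap.ker (bullet e) := by
      refine Submodule.span_le.mpr ?_ ha
      rintro s ⟨x, y, rfl⟩
      simp [LinearMap.mem_ker, rc e x y]
    simpa [LinearMap.mem_ker] using this
  · intro ha
    rw [hann]
    apply Submodule.subset_span
    exact ⟨a, e, by rw [he a, ha, sub_zero]⟩
end

section
/- If (J, +, •) is a right unital generalized Jordan algebra with right unit 1, then the set of all right units of J equals { 1 + a : a ∈ J^ann }, where J^ann = span{ x • y − y • x : x, y ∈ J }. -/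
theorem stmt_8 {k J : Type*} [Field k] [AddCommGroup J] [Module k J]
    (h2 : (2 : k) ≠ 0) (h3 : (3 : k) ≠ 0)
    (bullet : J →ₗ[k] J →ₗ[k] J)
    (rc : ∀ x y z : J, bullet x (bullet y z) = bullet x (bullet z y))
    (jid : ∀ x y : J, bullet (bullet y x) (bullet x x) = bullet (bullet y (bullet x x)) x)
    (hl : ∀ x y : J, bullet x (bullet y (bullet x x)) - bullet (bullet x y) (bullet x x) =
      (2 : k) • bullet (bullet x x) (bullet y x) - (2 : k) • bullet (bullet (bullet x x) y) x)
    (e : J) (he : ∀ x : J, bullet x e = x)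
    (ann : Submodule k J)
    (hann : ann = Submodule.span k {a : J | ∃ x y : J, a = bullet x y - bullet y x}) :
    ∀ u : J, (∀ x : J, bullet x u = x) ↔ ∃ a ∈ ann, u = e + a := by
  intro u
  constructor
  · intro hu
    refine ⟨u - e, ?_, by abel⟩
    rw [hann]
    apply Submodule.subset_span
    exact ⟨u, e, by rw [he u, hu e]⟩
  · rintro ⟨a, ha, rfl⟩ x
    have hz : bullet x a = 0 := by
      rw [hann] at ha
      induction ha using Submodule.span_induction with
      | mem b hb =>
        obtain ⟨y, z, rfl⟩ := hb
        rw [map_sub, rc x y z, sub_self]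
      | zero => simp
      | add b c _ _ hb hc => rw [map_add, hb, hc, add_zero]
      | smul c b _ hb => rw [map_smul, hb, smul_zero]
    rw [map_add, he x, hz, add_zero]
end

section
/- In a generalized Jordan algebra over a field of characteristic ≠ 2, 3, the linearized Hu-Liu identity holds: [x, y, x•z]_ℓ + [x, y, z•x]_ℓ + [z, y, x•x]_ℓ = 0 for all x, y, z, where [a, b, c]_ℓ := a • (b • c) − (a • b) • c − 2c • (b • a) + 2(c • b) • a. -/
theorem stmt_11 {k J : Type*} [Field k] [AddCommGroup J] [Module k J]
    (h2 : (2 : k) ≠ 0) (h3 : (3 : k) ≠ 0)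
    (bullet : J →ₗ[k] J →ₗ[k] J)
    (rc : ∀ x y z : J, bullet x (bullet y z) = bullet x (bullet z y))
    (jid : ∀ x y : J, bullet (bullet y x) (bullet x x) = bullet (bullet y (bullet x x)) x)
    (hl : ∀ x y : J, bullet x (bullet y (bullet x x)) - bullet (bullet x y) (bullet x x) =
      (2 : k) • bullet (bullet x x) (bullet y x) - (2 : k) • bullet (bullet (bullet x x) y) x)
    (lassoc : J → J → J → J)
    (hla : ∀ a b c : J, lassoc a b c = bullet a (bullet b c) - bullet (bullet a b) c
      - (2 : k) • bullet c (bullet b a) + (2 : k) • bullet (bullet c b) a) :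
    ∀ x y z : J, lassoc x y (bullet x z) + lassoc x y (bullet z x) + lassoc z y (bullet x x) = 0 := by
  intro x y z
  have H1 := hl (x + z) y
  have H2 := hl (x - z) y
  have H0 := hl z y
  simp only [hla, map_add, map_sub, LinearMap.add_apply, LinearMap.sub_apply] at H1 H2 ⊢
  linear_combination (norm := match_scalars <;> field_simp <;> ring) (2:k)⁻¹ • H1 - (2:k)⁻¹ • H2 - H0
end

section
/- In a generalized Jordan algebra over a field of characteristic ≠ 2, 3, the fully linearized Hu-Liu identity holds: [x, y, w•z + z•w]_ℓ + [w, y, z•x + x•z]_ℓ + [z, y, x•w + w•x]_ℓ = 0 for all x, y, z, w, where [a, b, c]_ℓ := a • (b • c) − (a • b) • c − 2c • (b • a) + 2(c • b) • a. -/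
set_option maxHeartbeats 2000000 in
theorem stmt_12 {k J : Type*} [Field k] [AddCommGroup J] [Module k J]
    (h2 : (2 : k) ≠ 0) (h3 : (3 : k) ≠ 0)
    (bullet : J →ₗ[k] J →ₗ[k] J)
    (rc : ∀ x y z : J, bullet x (bullet y z) = bullet x (bullet z y))
    (jid : ∀ x y : J, bullet (bullet y x) (bullet x x) = bullet (bullet y (bullet x x)) x)
    (hl : ∀ x y : J, bullet x (bullet y (bullet x x)) - bullet (bullet x y) (bullet x x) =
      (2 : k) • bullet (bullet x x) (bullet y x) - (2 : k) • bullet (bullet (bullet x x) y) x)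
    (lassoc : J → J → J → J)
    (hla : ∀ a b c : J, lassoc a b c = bullet a (bullet b c) - bullet (bullet a b) c
      - (2 : k) • bullet c (bullet b a) + (2 : k) • bullet (bullet c b) a) :
    ∀ x y z w : J, lassoc x y (bullet w z + bullet z w) + lassoc w y (bullet z x + bullet x z)
      + lassoc z y (bullet x w + bullet w x) = 0 := by
  intro x y z w
  have h1 := hl (x + w + z) y
  have h2 := hl (x + w) y
  have h3 := hl (x + z) y
  have h4 := hl (w + z) y
  have h5 := hl x y
  have h6 := hl w y
  have h7 := hl z y
  simp only [map_add, LinearMap.add_apply] at h1 h2 h3 h4 ⊢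
  simp only [hla, map_add, LinearMap.add_apply]
  linear_combination (norm := module) h1 - h2 - h3 - h4 + h5 + h6 + h7
end

section
/- If (J, +, •) is a generalized Jordan algebra over a field k of characteristic ≠ 2, 3, then the quotient J/J^ann with product x̄ ⊙ ȳ := (x • y) + J^ann is a (linear) Jordan algebra: ⊙ is commutative and satisfies the Jordan identity (ā ⊙ b̄) ⊙ (ā ⊙ ā) = ā ⊙ (b̄ ⊙ (ā ⊙ ā)). -/
theorem stmt_13 {k J : Type*} [Field k] [AddCommGroup J] [Module k J]
    (h2 : (2 : k) ≠ 0) (h3 : (3 : k) ≠ 0)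
    (bullet : J →ₗ[k] J →ₗ[k] J)
    (rc : ∀ x y z : J, bullet x (bullet y z) = bullet x (bullet z y))
    (jid : ∀ x y : J, bullet (bullet y x) (bullet x x) = bullet (bullet y (bullet x x)) x)
    (hl : ∀ x y : J, bullet x (bullet y (bullet x x)) - bullet (bullet x y) (bullet x x) =
      (2 : k) • bullet (bullet x x) (bullet y x) - (2 : k) • bullet (bullet (bullet x x) y) x)
    (ann : Submodule k J)
    (hann : ann = Submodule.span k {a : J | ∃ x y : J, a = bullet x y - bullet y x}) :
    ∀ a b : J, (bullet a b - bullet b a ∈ ann) ∧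
      (bullet (bullet a b) (bullet a a) - bullet a (bullet b (bullet a a)) ∈ ann) := by
  subst hann
  intro a b
  have comm : ∀ x y : J, bullet x y - bullet y x ∈
      Submodule.span k {a : J | ∃ x y : J, a = bullet x y - bullet y x} :=
    fun x y => Submodule.subset_span ⟨x, y, rfl⟩
  refine ⟨comm a b, ?_⟩
  have key : bullet (bullet a b) (bullet a a) - bullet a (bullet b (bullet a a)) =
      (bullet (bullet a b) (bullet a a) - bullet (bullet a a) (bullet a b)) +
      (bullet (bullet a a) (bullet b a) - bullet (bullet b a) (bullet a a)) +
      (bullet (bullet b (bullet a a)) a - bullet a (bullet b (bullet a a))) := by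
    rw [rc (bullet a a) a b, jid a b]
    abel
  rw [key]
  exact Submodule.add_mem _ (Submodule.add_mem _ (comm _ _) (comm _ _)) (comm _ _)
end

section
/- If (J, +, •) is a generalized Jordan algebra over a field of characteristic ≠ 2, 3, then J^ann becomes a Jordan bimodule over the Jordan algebra J/J^ann under the action u·x̄ := u • x; that is, the action is well-defined and satisfies (u(x̄⊙x̄))x̄ = (u x̄)(x̄⊙x̄) and 2((u x̄)ȳ)x̄ + u((x̄⊙x̄)⊙ȳ) = 2(u x̄)(x̄⊙ȳ) + (u ȳ)(x̄⊙x̄) for all u ∈ J^ann, x, y ∈ J. -/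
theorem stmt_14 {k J : Type*} [Field k] [AddCommGroup J] [Module k J]
    (h2 : (2 : k) ≠ 0) (h3 : (3 : k) ≠ 0)
    (bullet : J →ₗ[k] J →ₗ[k] J)
    (rc : ∀ x y z : J, bullet x (bullet y z) = bullet x (bullet z y))
    (jid : ∀ x y : J, bullet (bullet y x) (bullet x x) = bullet (bullet y (bullet x x)) x)
    (hl : ∀ x y : J, bullet x (bullet y (bullet x x)) - bullet (bullet x y) (bullet x x) =
      (2 : k) • bullet (bullet x x) (bullet y x) - (2 : k) • bullet (bullet (bullet x x) y) x)
    (ann : Submodule k J)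
    (hann : ann = Submodule.span k {a : J | ∃ x y : J, a = bullet x y - bullet y x}) :
    ∀ u ∈ ann,
      (∀ x y : J, x - y ∈ ann → bullet u x = bullet u y) ∧
      (∀ x : J, bullet u x ∈ ann) ∧
      (∀ x : J, bullet (bullet u (bullet x x)) x = bullet (bullet u x) (bullet x x)) ∧
      (∀ x y : J, (2 : k) • bullet (bullet (bullet u x) y) x + bullet u (bullet (bullet x x) y) =
        (2 : k) • bullet (bullet u x) (bullet x y) + bullet (bullet u y) (bullet x x)) := by
  -- Key lemma: anything bulleted with an element of `ann` (on the right) is zero.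
  have hz : ∀ a ∈ ann, ∀ t : J, bullet t a = 0 := by
    intro a ha t
    rw [hann] at ha
    induction ha using Submodule.span_induction with
    | mem b hb =>
        obtain ⟨p, q, rfl⟩ := hb
        rw [map_sub, rc t p q, sub_self]
    | zero => simp
    | add b c _ _ hb hc => rw [map_add, hb, hc, add_zero]
    | smul c b _ hb => rw [map_smul, hb, smul_zero]
  intro u hu
  -- `ann` is stable under the action.
  have hmem : ∀ x : J, bullet u x ∈ ann := by
    intro x
    have h0 : bullet u x = bullet u x - bullet x u := by
      rw [hz u hu x, sub_zero]
    rw [h0, hann]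
    exact Submodule.subset_span ⟨u, x, rfl⟩
  refine ⟨?_, hmem, fun x => (jid x u).symm, ?_⟩
  · intro x y hxy
    have : bullet u x - bullet u y = 0 := by
      rw [← map_sub, hz _ hxy u]
    exact sub_eq_zero.mp this
  · intro x y
    -- zero facts for simp
    have z1 : ∀ t : J, bullet t u = 0 := fun t => hz u hu t
    have z2 : ∀ t s : J, bullet t (bullet u s) = 0 := fun t s => hz _ (hmem s) t
    have h1 := hl (x + u) y
    have h0 := hl x y
    simp only [map_add, LinearMap.add_apply, z1, z2, add_zero, zero_add, map_zero,
      LinearMap.zero_apply, smul_add] at h1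
    -- rewrite with right commutativity
    rw [rc u (bullet x x) y, rc (bullet u x) x y]
    -- combine h1 - h0
    linear_combination (norm := module) h1 - h0
end

section
/- Generalized Cohn's Theorem: in the free associative Z₂-algebra FA₂[X ∪ Θ] over a field of characteristic ≠ 2, 3, the generalized Jordan algebra H(FA₂[X ∪ Θ], *) of all reversible elements (fixed points of the reversal involution) coincides with the generalized Jordan subalgebra of FA₂[X ∪ Θ]^+ (with product a • b = ½(a b₀ + b₀ a)) generated by 1, the generators X ∪ Θ, all even tetrads {x₁,x₂,x₃,x₄} = ½(x₁x₂x₃x₄ + x₄x₃x₂x₁) with x₁<x₂<x₃<x₄ in X, and all odd tetrads {θ,x₁,x₂,x₃} = ½(θx₁x₂x₃ + x₃x₂x₁θ) with θ ∈ Θ and x₁<x₂<x₃ in X. -/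
noncomputable section
variable (k : Type*) [Field k] (X Θ : Type*)

abbrev FA := MonoidAlgebra k (FreeMonoid (X ⊕ Θ))

/-- Θ-degree of a word. -/
def degTheta (w : FreeMonoid (X ⊕ Θ)) : ℕ := ((FreeMonoid.toList w).filter Sum.isRight).length

/-- reversal involution on the free algebra: reverse each word. -/
def rev (f : FA k X Θ) : FA k X Θ :=
  MonoidAlgebra.ofCoeff
    (Finsupp.mapDomain (fun w => FreeMonoid.ofList (FreeMonoid.toList w).reverse) f.coeff)

/-- even part: keep only the words with no Θ-letter. -/
def evenPart (f : FA k X Θ) : FA k X Θ :=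
  MonoidAlgebra.ofCoeff (Finsupp.filter (fun w => degTheta X Θ w = 0) f.coeff)

/-- bullet product a • b = ½(a b₀ + b₀ a). -/
def bullet (a b : FA k X Θ) : FA k X Θ :=
  (1/2 : k) • (a * evenPart k X Θ b + evenPart k X Θ b * a)

/-- the ideal I_Θ spanned by monomials of Θ-degree ≥ 2. -/
def Itheta : Submodule k (FA k X Θ) :=
  Submodule.span k {f | ∃ w, 2 ≤ degTheta X Θ w ∧ f = MonoidAlgebra.of k (FreeMonoid (X ⊕ Θ)) w}

/-- the monomial corresponding to a list of generators. -/
def wprod (l : List (X ⊕ Θ)) : FA k X Θ :=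
  MonoidAlgebra.of k (FreeMonoid (X ⊕ Θ)) (FreeMonoid.ofList l)

/-- {y₁,…,yₙ} := ½(y₁⋯yₙ + yₙ⋯y₁). -/
def tetrad (l : List (X ⊕ Θ)) : FA k X Θ :=
  (1/2 : k) • (wprod k X Θ l + wprod k X Θ l.reverse)

variable [LinearOrder X]

/-- membership in the generalized Jordan subalgebra of FA₂[X ∪ Θ] (pulled back to the
free algebra, hence containing I_Θ) generated by 1, the generators X ∪ Θ, the even
tetrads and the odd tetrads: the smallest subspace containing these which is closed
under the bullet product. -/
inductive GJC : FA k X Θ → Prop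
  | ideal {a} (h : a ∈ Itheta k X Θ) : GJC a
  | one : GJC 1
  | gen (g : X ⊕ Θ) : GJC (wprod k X Θ [g])
  | evenTetrad (x₁ x₂ x₃ x₄ : X) (h₁₂ : x₁ < x₂) (h₂₃ : x₂ < x₃) (h₃₄ : x₃ < x₄) :
      GJC (tetrad k X Θ [Sum.inl x₁, Sum.inl x₂, Sum.inl x₃, Sum.inl x₄])
  | oddTetrad (θ : Θ) (x₁ x₂ x₃ : X) (h₁₂ : x₁ < x₂) (h₂₃ : x₂ < x₃) :
      GJC (tetrad k X Θ [Sum.inr θ, Sum.inl x₁, Sum.inl x₂, Sum.inl x₃])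
  | add {a b} : GJC a → GJC b → GJC (a + b)
  | smul (c : k) {a} : GJC a → GJC (c • a)
  | bullet {a b} : GJC a → GJC b → GJC (bullet k X Θ a b)


variable {k X Θ}

-- ### basic word lemmas

def degL (l : List (X ⊕ Θ)) : ℕ := (l.filter Sum.isRight).length

lemma degTheta_ofList (l : List (X ⊕ Θ)) : degTheta X Θ (FreeMonoid.ofList l) = degL l := by
  simp [degTheta, degL]

lemma degL_append (l₁ l₂ : List (X ⊕ Θ)) : degL (l₁ ++ l₂) = degL l₁ + degL l₂ := by
  simp [degL]

lemma degL_reverse (l : List (X ⊕ Θ)) : degL l.reverse = degL l := by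
  simp [degL, List.filter_reverse]

lemma degTheta_mul (u v : FreeMonoid (X ⊕ Θ)) :
    degTheta X Θ (u * v) = degTheta X Θ u + degTheta X Θ v := by
  simp [degTheta, FreeMonoid.toList_mul]

lemma degTheta_reverse (w : FreeMonoid (X ⊕ Θ)) :
    degTheta X Θ (FreeMonoid.ofList (FreeMonoid.toList w).reverse) = degTheta X Θ w := by
  simp [degTheta, List.filter_reverse]

lemma wprod_append (l₁ l₂ : List (X ⊕ Θ)) :
    wprod k X Θ (l₁ ++ l₂) = wprod k X Θ l₁ * wprod k X Θ l₂ := by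
  simp [wprod, ← map_mul]

lemma tetrad_reverse (l : List (X ⊕ Θ)) : tetrad k X Θ l.reverse = tetrad k X Θ l := by
  simp [tetrad]
  rw [add_comm]

lemma wprod_single (w : FreeMonoid (X ⊕ Θ)) :
    MonoidAlgebra.single w (1:k) = wprod k X Θ (FreeMonoid.toList w) := by
  simp [wprod, MonoidAlgebra.of_apply]

-- ### membership in Itheta
lemma mem_Itheta_iff {f : FA k X Θ} :
    f ∈ Itheta k X Θ ↔ ∀ w, degTheta X Θ w ≤ 1 → f.coeff w = 0 := by
  constructor
  · intro hf
    induction hf using Submodule.span_induction with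
    | mem x hx =>
      obtain ⟨w', hw', rfl⟩ := hx
      intro w hw
      classical
      rw [MonoidAlgebra.of_apply, MonoidAlgebra.coeff_single, Finsupp.single_apply]
      rw [if_neg]
      rintro rfl
      omega
    | zero => intro w _; rfl
    | add x y _ _ hx hy =>
        intro w hw
        show (_ + _ : FA k X Θ).coeff w = 0
        rw [MonoidAlgebra.coeff_add, Finsupp.add_apply, hx w hw, hy w hw, add_zero]
    | smul c x _ hx =>
        intro w hw
        show (c • _ : FA k X Θ).coeff w = 0
        rw [MonoidAlgebra.coeff_smul_apply, hx w hw, smul_zero]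
  · intro h
    have : f = f.coeff.sum (fun w c => MonoidAlgebra.single w c) :=
      (MonoidAlgebra.sum_coeff_single f).symm
    rw [this]
    apply Submodule.finsuppSum_mem
    intro w hw
    have hdeg : 2 ≤ degTheta X Θ w := by
      by_contra hh
      exact hw (h w (by omega))
    have : (MonoidAlgebra.single w (f.coeff w) : FA k X Θ) = (f.coeff w) • MonoidAlgebra.of k _ w := by
      simp [MonoidAlgebra.of_apply, MonoidAlgebra.smul_single']
    rw [this]
    exact Submodule.smul_mem _ _ (Submodule.subset_span ⟨w, hdeg, rfl⟩)
-- ### Itheta is an ideal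
lemma Itheta_mul_left {f : FA k X Θ} (g : FA k X Θ) (hf : f ∈ Itheta k X Θ) :
    g * f ∈ Itheta k X Θ := by
  classical
  rw [mem_Itheta_iff] at hf ⊢
  intro w hw
  rw [MonoidAlgebra.coeff_mul]
  apply Finset.sum_eq_zero
  intro a₁ _
  apply Finset.sum_eq_zero
  intro a₂ _
  dsimp only
  split
  · rename_i h
    have : degTheta X Θ a₂ ≤ 1 := by
      have := degTheta_mul a₁ a₂
      rw [h] at this
      omega
    rw [hf a₂ this, mul_zero]
  · rfl

lemma Itheta_mul_right {f : FA k X Θ} (g : FA k X Θ) (hf : f ∈ Itheta k X Θ) :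
    f * g ∈ Itheta k X Θ := by
  classical
  rw [mem_Itheta_iff] at hf ⊢
  intro w hw
  rw [MonoidAlgebra.coeff_mul]
  apply Finset.sum_eq_zero
  intro a₁ _
  apply Finset.sum_eq_zero
  intro a₂ _
  dsimp only
  split
  · rename_i h
    have : degTheta X Θ a₁ ≤ 1 := by
      have := degTheta_mul a₁ a₂
      rw [h] at this
      omega
    rw [hf a₁ this, zero_mul]
  · rfl

-- ### rev lemmas
lemma rev_apply (f : FA k X Θ) (w : FreeMonoid (X ⊕ Θ)) :
    (rev k X Θ f).coeff w = f.coeff (FreeMonoid.ofList (FreeMonoid.toList w).reverse) := by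
  classical
  have hinj : Function.Injective
      (fun w : FreeMonoid (X ⊕ Θ) => FreeMonoid.ofList (FreeMonoid.toList w).reverse) := by
    intro a b h
    simpa using congrArg (fun w => FreeMonoid.ofList (FreeMonoid.toList w).reverse) h
  have : w = FreeMonoid.ofList (FreeMonoid.toList
      (FreeMonoid.ofList (FreeMonoid.toList w).reverse)).reverse := by
    simp
  conv_lhs => rw [this]
  exact Finsupp.mapDomain_apply hinj f.coeff _

lemma rev_add (f g : FA k X Θ) : rev k X Θ (f + g) = rev k X Θ f + rev k X Θ g :=
  congrArg MonoidAlgebra.ofCoeff Finsupp.mapDomain_add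

lemma rev_smul (c : k) (f : FA k X Θ) : rev k X Θ (c • f) = c • rev k X Θ f :=
  congrArg MonoidAlgebra.ofCoeff (Finsupp.mapDomain_smul c f.coeff)

lemma rev_single (w : FreeMonoid (X ⊕ Θ)) (c : k) :
    rev k X Θ (MonoidAlgebra.single w c) =
      MonoidAlgebra.single (FreeMonoid.ofList (FreeMonoid.toList w).reverse) c :=
  congrArg MonoidAlgebra.ofCoeff Finsupp.mapDomain_single

lemma rev_sub (f g : FA k X Θ) : rev k X Θ (f - g) = rev k X Θ f - rev k X Θ g := by
  have h := rev_add (k := k) (X := X) (Θ := Θ) (f - g) g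
  rw [sub_add_cancel] at h
  rw [h]; abel

lemma rev_one : rev k X Θ 1 = 1 := by
  show rev k X Θ (MonoidAlgebra.single 1 1) = MonoidAlgebra.single 1 1
  rw [rev_single]
  rfl

lemma rev_mul (f g : FA k X Θ) : rev k X Θ (f * g) = rev k X Θ g * rev k X Θ f := by
  induction f using MonoidAlgebra.induction_linear with
  | zero => simp [rev, mul_zero, zero_mul]
  | add a b ha hb => rw [add_mul, rev_add, ha, hb, rev_add, mul_add]
  | single wa ca =>
    induction g using MonoidAlgebra.induction_linear with
    | zero => simp [rev, mul_zero, zero_mul]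
    | add a b ha hb => rw [mul_add, rev_add, ha, hb, rev_add, add_mul]
    | single wb cb =>
      show rev k X Θ (MonoidAlgebra.single wa ca * MonoidAlgebra.single wb cb) = _
      rw [MonoidAlgebra.single_mul_single, rev_single, rev_single, rev_single,
        MonoidAlgebra.single_mul_single, mul_comm cb ca]
      congr 1
      apply FreeMonoid.toList.injective
      simp [FreeMonoid.toList_mul]

lemma rev_tetrad (l : List (X ⊕ Θ)) : rev k X Θ (tetrad k X Θ l) = tetrad k X Θ l := by
  rw [tetrad, rev_smul, rev_add]
  show (1/2:k) • (rev k X Θ (MonoidAlgebra.single _ 1) + rev k X Θ (MonoidAlgebra.single _ 1)) = _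
  rw [rev_single, rev_single]
  simp only [FreeMonoid.toList_ofList, List.reverse_reverse]
  rw [add_comm]
  rfl

lemma rev_mem_Itheta {f : FA k X Θ} (hf : f ∈ Itheta k X Θ) : rev k X Θ f ∈ Itheta k X Θ := by
  rw [mem_Itheta_iff] at hf ⊢
  intro w hw
  rw [rev_apply]
  exact hf _ (by rw [degTheta_reverse]; exact hw)

-- ### evenPart lemmas
lemma evenPart_apply (f : FA k X Θ) (w : FreeMonoid (X ⊕ Θ)) :
    (evenPart k X Θ f).coeff w = if degTheta X Θ w = 0 then f.coeff w else 0 :=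
  Finsupp.filter_apply _ f.coeff w

lemma evenPart_add (f g : FA k X Θ) :
    evenPart k X Θ (f + g) = evenPart k X Θ f + evenPart k X Θ g :=
  congrArg MonoidAlgebra.ofCoeff Finsupp.filter_add

lemma evenPart_of_mem_Itheta {f : FA k X Θ} (hf : f ∈ Itheta k X Θ) : evenPart k X Θ f = 0 := by
  rw [mem_Itheta_iff] at hf
  ext w
  rw [evenPart_apply]
  split
  · rename_i h; exact hf w (by omega)
  · rfl

lemma evenPart_rev (f : FA k X Θ) :
    evenPart k X Θ (rev k X Θ f) = rev k X Θ (evenPart k X Θ f) := by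
  ext w
  rw [evenPart_apply, rev_apply, rev_apply, evenPart_apply, degTheta_reverse]

lemma evenPart_wprod {l : List (X ⊕ Θ)} (h : degL l = 0) :
    evenPart k X Θ (wprod k X Θ l) = wprod k X Θ l := by
  rw [wprod, MonoidAlgebra.of_apply]
  apply MonoidAlgebra.coeff_injective
  exact Finsupp.filter_single_of_pos _
    (show degTheta X Θ (FreeMonoid.ofList l) = 0 by rw [degTheta_ofList]; exact h)

lemma evenPart_smul (c : k) (f : FA k X Θ) :
    evenPart k X Θ (c • f) = c • evenPart k X Θ f := by
  ext w
  rw [evenPart_apply, MonoidAlgebra.coeff_smul_apply, MonoidAlgebra.coeff_smul_apply,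
    evenPart_apply]
  split <;> simp

lemma evenPart_tetrad {l : List (X ⊕ Θ)} (h : degL l = 0) :
    evenPart k X Θ (tetrad k X Θ l) = tetrad k X Θ l := by
  rw [tetrad, evenPart_smul, evenPart_add, evenPart_wprod h,
    evenPart_wprod (by rw [degL_reverse]; exact h)]

variable (k X Θ) in
/-- the subalgebra as a submodule -/
def Gsub : Submodule k (FA k X Θ) where
  carrier := {a | GJC k X Θ a}
  zero_mem' := GJC.ideal (zero_mem _)
  add_mem' := GJC.add
  smul_mem' := GJC.smul

lemma Itheta_le_Gsub {a : FA k X Θ} (h : a ∈ Itheta k X Θ) : a ∈ Gsub k X Θ := GJC.ideal h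

lemma tetrad_mem_Itheta {l : List (X ⊕ Θ)} (h : 2 ≤ degL l) :
    tetrad k X Θ l ∈ Itheta k X Θ := by
  rw [tetrad]
  apply Submodule.smul_mem
  apply Submodule.add_mem <;>
  · apply Submodule.subset_span
    refine ⟨_, ?_, rfl⟩
    rw [degTheta_ofList]
    first
    | exact h
    | (rw [degL_reverse]; exact h)

/-- key computation: the fundamental tetrad relation via the bullet product -/
lemma bullet_tetrad_tetrad (h2 : (2:k) ≠ 0) (u v : List (X ⊕ Θ)) (hv : degL v = 0) :
    tetrad k X Θ (u ++ v) + tetrad k X Θ (u.reverse ++ v) + tetrad k X Θ (u ++ v.reverse)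
      + tetrad k X Θ (u.reverse ++ v.reverse)
    = (4 : k) • bullet k X Θ (tetrad k X Θ u) (tetrad k X Θ v) := by
  rw [bullet, evenPart_tetrad hv]
  simp only [tetrad, List.reverse_append, List.reverse_reverse, wprod_append]
  rw [show ((4:k) • ((1/2:k) • (((1/2:k) • (wprod k X Θ u + wprod k X Θ u.reverse)) *
      ((1/2:k) • (wprod k X Θ v + wprod k X Θ v.reverse)) +
      ((1/2:k) • (wprod k X Θ v + wprod k X Θ v.reverse)) *
      ((1/2:k) • (wprod k X Θ u + wprod k X Θ u.reverse))))) = _ from rfl]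
  simp only [smul_mul_assoc, mul_smul_comm, mul_add, add_mul, smul_add, smul_smul]
  match_scalars <;> (field_simp ; try ring)

lemma length_pos_of_ne_nil {l : List (X ⊕ Θ)} (h : l ≠ []) : 0 < l.length :=
  List.length_pos_iff.mpr h

/-- the fundamental relation, valid whenever all shorter tetrads are in the subalgebra -/
lemma tetrad_rel (h2 : (2:k) ≠ 0) (n : ℕ)
    (IH : ∀ l : List (X ⊕ Θ), l.length < n → tetrad k X Θ l ∈ Gsub k X Θ)
    (u v : List (X ⊕ Θ)) (hu : u ≠ []) (hv : v ≠ []) (hlen : u.length + v.length = n) :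
    tetrad k X Θ (u ++ v) + tetrad k X Θ (u.reverse ++ v) + tetrad k X Θ (u ++ v.reverse)
      + tetrad k X Θ (u.reverse ++ v.reverse) ∈ Gsub k X Θ := by
  have hul : u.length < n := by have := length_pos_of_ne_nil hv; omega
  have hvl : v.length < n := by have := length_pos_of_ne_nil hu; omega
  by_cases dv : degL v = 0
  · rw [bullet_tetrad_tetrad h2 u v dv]
    exact Submodule.smul_mem _ _ (GJC.bullet (IH u hul) (IH v hvl))
  · by_cases du : degL u = 0
    · have e1 : tetrad k X Θ (u ++ v) = tetrad k X Θ (v.reverse ++ u.reverse) := by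
        rw [show v.reverse ++ u.reverse = (u ++ v).reverse by simp, tetrad_reverse]
      have e2 : tetrad k X Θ (u.reverse ++ v) = tetrad k X Θ (v.reverse ++ u) := by
        rw [show v.reverse ++ u = (u.reverse ++ v).reverse by simp, tetrad_reverse]
      have e3 : tetrad k X Θ (u ++ v.reverse) = tetrad k X Θ (v ++ u.reverse) := by
        rw [show v ++ u.reverse = (u ++ v.reverse).reverse by simp, tetrad_reverse]
      have e4 : tetrad k X Θ (u.reverse ++ v.reverse) = tetrad k X Θ (v ++ u) := by
        rw [show v ++ u = (u.reverse ++ v.reverse).reverse by simp, tetrad_reverse]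
      have hmem : tetrad k X Θ (v ++ u) + tetrad k X Θ (v.reverse ++ u)
          + tetrad k X Θ (v ++ u.reverse) + tetrad k X Θ (v.reverse ++ u.reverse)
          ∈ Gsub k X Θ := by
        rw [bullet_tetrad_tetrad h2 v u du]
        exact Submodule.smul_mem _ _ (GJC.bullet (IH v hvl) (IH u hul))
      have heq : tetrad k X Θ (u ++ v) + tetrad k X Θ (u.reverse ++ v)
          + tetrad k X Θ (u ++ v.reverse) + tetrad k X Θ (u.reverse ++ v.reverse)
          = tetrad k X Θ (v ++ u) + tetrad k X Θ (v.reverse ++ u)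
          + tetrad k X Θ (v ++ u.reverse) + tetrad k X Θ (v.reverse ++ u.reverse) := by
        rw [e1, e2, e3, e4]; abel
      rw [heq]; exact hmem
    · have hd : ∀ a b : List (X ⊕ Θ), degL a = degL u → degL b = degL v →
          tetrad k X Θ (a ++ b) ∈ Gsub k X Θ := by
        intro a b ha hb
        apply Itheta_le_Gsub
        apply tetrad_mem_Itheta
        rw [degL_append]
        omega
      refine Submodule.add_mem _ (Submodule.add_mem _ (Submodule.add_mem _ ?_ ?_) ?_) ?_ <;>
        apply hd <;> simp [degL_reverse]

-- ### abstract sign machinery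
section Abstract
variable {K : Type*} [Field K] {A : Type*} {Q : Type*} [AddCommGroup Q] [Module K Q]

lemma kill_smul (c : K) (hc : c ≠ 0) (q : Q) (h : c • q = 0) : q = 0 := by
  have : (c⁻¹ * c) • q = 0 := by rw [mul_smul, h, smul_zero]
  rwa [inv_mul_cancel₀ hc, one_smul] at this

lemma kill_two (h2 : (2:K) ≠ 0) (q : Q) (h : q + q = 0) : q = 0 := by
  apply kill_smul (2:K) h2
  rw [two_smul]; exact h

lemma sign_smul_cancel (m : ℕ) (q : Q) : ((-1:K)^m) • (((-1:K)^m) • q) = q := by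
  rw [smul_smul, ← pow_add]
  rw [Even.neg_one_pow ⟨m, rfl⟩, one_smul]

variable (h2 : (2:K) ≠ 0) {n : ℕ} (hn3 : 3 ≤ n) (s : List A → Q)
variable (hsym : ∀ l : List A, s l.reverse = s l)
variable (hrel : ∀ u v : List A, u ≠ [] → v ≠ [] → u.length + v.length = n →
    s (u++v) + s (u.reverse++v) + s (u++v.reverse) + s (u.reverse++v.reverse) = 0)

include h2 hrel in
lemma sE2 (a : A) (v : List A) (hv : v ≠ []) (h : (a::v).length = n) :
    s (a::v) = - s (a::v.reverse) := by
  have hr := hrel [a] v (by simp) hv (by simp at h ⊢; omega)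
  simp only [List.singleton_append, List.reverse_singleton] at hr
  have h' : (s (a::v) + s (a::v.reverse)) + (s (a::v) + s (a::v.reverse)) = 0 := by
    rw [← hr]; abel
  have := kill_two h2 _ h'
  exact eq_neg_of_add_eq_zero_left this

include h2 hsym hrel in
lemma srot (a : A) (v : List A) (hv : v ≠ []) (h : (a::v).length = n) :
    s (a::v) = - s (v ++ [a]) := by
  have h1 := hsym (a::v.reverse)
  simp only [List.reverse_cons, List.reverse_reverse] at h1
  rw [sE2 h2 s hrel a v hv h, h1]

include h2 hsym hrel in
lemma sswap0 (a b : A) (v : List A) (hv : v ≠ []) (h : (a::b::v).length = n) :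
    s (b::a::v) = - s (a::b::v) := by
  have hlen : (b::a::v).length = n := by simp at h ⊢; omega
  have hr' : s (a::b::v) + s (b::a::v) + s (a::b::v.reverse) + s (b::a::v.reverse) = 0 := by
    have hr := hrel [a,b] v (by simp) hv (by simp at h ⊢; omega)
    simpa using hr
  have e1 : s (a::b::v.reverse) = s (b::a::v) := by
    have t1 : s (a::b::v.reverse) = s ((v ++ [b]) ++ [a]) := by
      rw [← hsym (a::b::v.reverse)]; congr 1; simp
    have t2 := srot h2 s hsym hrel a (v ++ [b]) (by simp) (by simp at h ⊢; omega)
    have t3 := srot h2 s hsym hrel b (a::v) (by simp) hlen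
    have t3' : s (b::a::v) = - s (a :: (v ++ [b])) := by
      rw [t3]; congr 2
    rw [t1, t3', t2, neg_neg]
  have e2 : s (b::a::v.reverse) = s (a::b::v) := by
    have t1 : s (b::a::v.reverse) = s ((v ++ [a]) ++ [b]) := by
      rw [← hsym (b::a::v.reverse)]; congr 1; simp
    have t2 := srot h2 s hsym hrel b (v ++ [a]) (by simp) (by simp at h ⊢; omega)
    have t3 := srot h2 s hsym hrel a (b::v) (by simp) (by simp at h ⊢; omega)
    have t3' : s (a::b::v) = - s (b :: (v ++ [a])) := by
      rw [t3]; congr 2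
    rw [t1, t3', t2, neg_neg]
  rw [e1, e2] at hr'
  have h' : (s (a::b::v) + s (b::a::v)) + (s (a::b::v) + s (b::a::v)) = 0 := by
    rw [← hr']; abel
  have := kill_two h2 _ h'
  exact eq_neg_of_add_eq_zero_right this

include h2 hn3 hsym hrel in
lemma sswap (x : List A) (a b : A) (y : List A) (h : (x++a::b::y).length = n) :
    s (x++b::a::y) = - s (x++a::b::y) := by
  induction x generalizing y with
  | nil =>
    simp only [List.nil_append] at h ⊢
    have hy : y ≠ [] := by
      intro hy; rw [hy] at h; simp at h; omega
    exact sswap0 h2 s hsym hrel a b y hy h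
  | cons c x' IHx =>
    have r1 := srot h2 s hsym hrel c (x'++b::a::y) (by simp) (by simp at h ⊢; omega)
    have r2 := srot h2 s hsym hrel c (x'++a::b::y) (by simp) (by simp at h ⊢; omega)
    have key := IHx (y ++ [c]) (by simp at h ⊢; omega)
    have e1 : s ((x'++b::a::y) ++ [c]) = s (x' ++ b::a::(y++[c])) := by congr 1; simp
    have e2 : s ((x'++a::b::y) ++ [c]) = s (x' ++ a::b::(y++[c])) := by congr 1; simp
    show s (c :: (x'++b::a::y)) = - s (c :: (x'++a::b::y))
    rw [r1, r2, e1, e2, key, neg_neg]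

include h2 hn3 hsym hrel in
lemma sbubble (z : List A) (x : List A) (a : A) (y : List A)
    (h : (x++a::(z++y)).length = n) :
    s (x++a::(z++y)) = ((-1:K)^z.length) • s (x++(z++(a::y))) := by
  induction z generalizing x with
  | nil => simp
  | cons c z' IHz =>
    have hs := sswap h2 hn3 s hsym hrel x a c (z'++y) (by simp at h ⊢; omega)
    have hs' : s (x++a::(c::z'++y)) = - s ((x++[c]) ++ a::(z'++y)) := by
      have : s (x++a::c::(z'++y)) = - s (x++c::a::(z'++y)) := by rw [hs, neg_neg]
      rw [show x++a::(c::z'++y) = x++a::c::(z'++y) from rfl, this]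
      congr 2
      simp
    have key := IHz (x++[c]) (by simp at h ⊢; omega)
    have e2 : s ((x++[c]) ++ (z'++(a::y))) = s (x ++ (c::z'++(a::y))) := by congr 1; simp
    rw [hs', key, e2, List.length_cons, pow_succ]
    module

lemma choose_two_succ (m : ℕ) : (m+1).choose 2 = m.choose 2 + m := by
  rw [Nat.choose_succ_succ m 1, Nat.choose_one_right, Nat.add_comm]

include h2 hn3 hsym hrel in
lemma sblockrev (y : List A) (x t : List A) (h : (x++(y++t)).length = n) :
    s (x++(y.reverse++t)) = ((-1:K)^(y.length.choose 2)) • s (x++(y++t)) := by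
  induction y generalizing x t with
  | nil => simp
  | cons a y' IHy =>
    have e1 : s (x ++ ((a::y').reverse ++ t)) = s (x ++ (y'.reverse ++ (a::t))) := by
      congr 1; simp
    have key := IHy x (a::t) (by simp at h ⊢; omega)
    have hb := sbubble h2 hn3 s hsym hrel y' x a t (by simp at h ⊢; omega)
    have hb' : s (x++(y'++(a::t))) = ((-1:K)^y'.length) • s (x++a::(y'++t)) := by
      rw [hb, sign_smul_cancel]
    have e3 : s (x ++ a::(y'++t)) = s (x ++ ((a::y')++t)) := by congr 1
    rw [e1, key, hb', e3, List.length_cons, choose_two_succ, smul_smul, ← pow_add]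

end Abstract

section Abstract2
variable {K : Type*} [Field K] {A : Type*} {Q : Type*} [AddCommGroup Q] [Module K Q]
variable (h2 : (2:K) ≠ 0) {n : ℕ} (hn3 : 3 ≤ n) (s : List A → Q)
variable (hsym : ∀ l : List A, s l.reverse = s l)
variable (hrel : ∀ u v : List A, u ≠ [] → v ≠ [] → u.length + v.length = n →
    s (u++v) + s (u.reverse++v) + s (u++v.reverse) + s (u.reverse++v.reverse) = 0)

include h2 hn3 hsym hrel in
lemma sperm (l₁ l₂ : List A) (p : l₁.Perm l₂) : ∀ pre : List A, (pre++l₁).length = n →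
    s (pre++l₁) = s (pre++l₂) ∨ s (pre++l₁) = - s (pre++l₂) := by
  induction p with
  | nil => intro pre h; left; rfl
  | @cons x t₁ t₂ p IH =>
    intro pre h
    have e₁ : s (pre++x::t₁) = s ((pre++[x])++t₁) := by congr 1; simp
    have e₂ : s (pre++x::t₂) = s ((pre++[x])++t₂) := by congr 1; simp
    rw [e₁, e₂]
    exact IH (pre++[x]) (by simp at h ⊢; omega)
  | swap x y l =>
    intro pre h
    right
    exact sswap h2 hn3 s hsym hrel pre x y l (by simp at h ⊢; omega)
  | @trans t₁ t₂ t₃ p₁ p₂ IH₁ IH₂ =>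
    intro pre h
    have h₂ : (pre++t₂).length = n := by
      rw [List.length_append, ← p₁.length_eq, ← List.length_append]; exact h
    rcases IH₁ pre h with e | e <;> rcases IH₂ pre h₂ with e' | e'
    · left; rw [e, e']
    · right; rw [e, e']
    · right; rw [e, e']
    · left; rw [e, e', neg_neg]

include h2 hn3 hsym hrel in
lemma sodd (hodd : n % 2 = 1) (l : List A) (hl : l.length = n) : s l = 0 := by
  cases l with
  | nil => simp at hl; omega
  | cons a v =>
    have hv : v ≠ [] := by intro hv; rw [hv] at hl; simp at hl; omega
    have hb := sbubble h2 hn3 s hsym hrel v [] a [] (by simp at hl ⊢; omega)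
    have e₁ : s ([]++a::(v++[])) = s (a::v) := by congr 1; simp
    have e₂ : s ([]++(v++(a::[]))) = s (v++[a]) := by congr 1
    rw [e₁, e₂] at hb
    have hvlen : v.length = n - 1 := by simp at hl; omega
    have heven : ((-1:K)^v.length) = 1 := by
      apply Even.neg_one_pow
      rw [Nat.even_iff, hvlen]
      omega
    rw [heven, one_smul] at hb
    have hr := srot h2 s hsym hrel a v hv hl
    have : s (v++[a]) + s (v++[a]) = 0 := by
      nth_rewrite 1 [← hb]
      rw [hr]
      abel
    have h0 := kill_two h2 _ this
    rw [hb, h0]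

include h2 hn3 hsym hrel in
lemma smod2 (hmod : n % 4 = 2) (l : List A) (hl : l.length = n) : s l = 0 := by
  obtain ⟨j, rfl⟩ : ∃ j, n = 4*j+2 := ⟨n/4, by omega⟩
  have hb := sblockrev h2 hn3 s hsym hrel l [] [] (by simp at hl ⊢; omega)
  have e₁ : s ([]++(l.reverse++[])) = s l.reverse := by congr 1; simp
  have e₂ : s ([]++(l++[])) = s l := by congr 1; simp
  rw [e₁, e₂, hsym, hl] at hb
  have hchoose : (4*j+2).choose 2 = (2*j+1)*(4*j+1) := by
    rw [Nat.choose_two_right]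
    rw [show 4*j+2-1 = 4*j+1 by omega]
    rw [show 4*j+2 = 2*(2*j+1) by ring, mul_assoc, Nat.mul_div_cancel_left _ (by norm_num)]
  have hodd : Odd ((4*j+2).choose 2) := by
    rw [hchoose]
    exact (Nat.odd_iff.mpr (by omega)).mul (Nat.odd_iff.mpr (by omega))
  rw [Odd.neg_one_pow hodd, neg_one_smul] at hb
  have : s l + s l = 0 := by nth_rewrite 2 [hb]; simp
  exact kill_two h2 _ this

include h2 hn3 hsym hrel in
lemma smod0 (hmod : n % 4 = 0) (hn8 : 8 ≤ n) (l : List A) (hl : l.length = n) : s l = 0 := by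
  set u := l.take 4 with hu
  set v := l.drop 4 with hv
  have hul : u.length = 4 := by rw [hu, List.length_take]; omega
  have hvl : v.length = n - 4 := by rw [hv, List.length_drop, hl]
  have hluv : l = u ++ v := (List.take_append_drop 4 l).symm
  have hrel' := hrel u v (by intro e; rw [e] at hul; simp at hul)
      (by intro e; rw [e] at hvl; simp at hvl; omega) (by omega)
  have e₁ : s (u.reverse ++ v) = s (u ++ v) := by
    have := sblockrev h2 hn3 s hsym hrel u [] v (by simp; omega)
    have a₁ : s ([]++(u.reverse++v)) = s (u.reverse++v) := by congr 1
    have a₂ : s ([]++(u++v)) = s (u++v) := by congr 1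
    rw [a₁, a₂, hul, show Nat.choose 4 2 = 6 from rfl] at this
    norm_num at this
    exact this
  have hvchoose : Even ((n-4).choose 2) := by
    obtain ⟨i, hi⟩ : ∃ i, n - 4 = 4*i := ⟨(n-4)/4, by omega⟩
    rw [hi, Nat.choose_two_right]
    rcases Nat.eq_zero_or_pos i with h0 | hpos
    · simp [h0]
    · rw [show 4*i-1 = 4*i-1 from rfl]
      rw [show 4*i = 2*(2*i) by ring, mul_assoc, Nat.mul_div_cancel_left _ (by norm_num)]
      exact Even.mul_right ⟨i, by ring⟩ _
  have e₂ : s (u ++ v.reverse) = s (u ++ v) := by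
    have := sblockrev h2 hn3 s hsym hrel v u [] (by simp at hl ⊢; omega)
    have a₁ : s (u++(v.reverse++[])) = s (u++v.reverse) := by congr 1; simp
    have a₂ : s (u++(v++[])) = s (u++v) := by congr 1; simp
    rw [a₁, a₂, hvl, Even.neg_one_pow hvchoose, one_smul] at this
    exact this
  have e₃ : s (u.reverse ++ v.reverse) = s (u ++ v) := by
    have := sblockrev h2 hn3 s hsym hrel u [] v.reverse (by simp at hl ⊢; omega)
    have a₁ : s ([]++(u.reverse++v.reverse)) = s (u.reverse++v.reverse) := by congr 1
    have a₂ : s ([]++(u++v.reverse)) = s (u++v.reverse) := by congr 1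
    rw [a₁, a₂, hul, show Nat.choose 4 2 = 6 from rfl] at this
    norm_num at this
    rw [this, e₂]
  rw [e₁, e₂, e₃] at hrel'
  have h4 : (s (u++v) + s (u++v)) + (s (u++v) + s (u++v)) = 0 := by rw [← hrel']; abel
  have := kill_two h2 _ (kill_two h2 _ h4)
  rw [hluv, this]

end Abstract2

lemma exists_perm_dup {A : Type*} : ∀ {l : List A}, ¬ l.Nodup → ∃ a t, l.Perm (a::a::t) := by
  classical
  intro l
  induction l with
  | nil => intro h; exact absurd List.nodup_nil h
  | cons b l' IH =>
    intro h
    by_cases hb : b ∈ l'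
    · exact ⟨b, l'.erase b, (List.perm_cons_erase hb).cons b⟩
    · have : ¬ l'.Nodup := by
        intro hn
        exact h (List.nodup_cons.mpr ⟨hb, hn⟩)
      obtain ⟨a, t, p⟩ := IH this
      exact ⟨a, b::t,
        (p.cons b).trans ((List.Perm.swap a b (a::t)).trans ((List.Perm.swap a b t).cons a))⟩

-- ### the order on X ⊕ Θ
variable (X Θ) in
def ord : (X ⊕ Θ) → (X ⊕ Θ) → Prop
  | .inr _, _ => True
  | .inl _, .inr _ => False
  | .inl x, .inl y => x ≤ y

lemma ord_inr (θ : Θ) (b : X ⊕ Θ) : ord X Θ (.inr θ) b := trivial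

lemma ord_inl_inl (x y : X) : ord X Θ (.inl x) (.inl y) ↔ x ≤ y := Iff.rfl

lemma ord_inl_inr (x : X) (θ : Θ) : ¬ ord X Θ (.inl x) (.inr θ) := fun h => h

instance : DecidableRel (ord X Θ) := fun a b =>
  match a, b with
  | .inr _, _ => .isTrue trivial
  | .inl _, .inr _ => .isFalse (fun h => h)
  | .inl x, .inl y => inferInstanceAs (Decidable (x ≤ y))

instance : IsTotal (X ⊕ Θ) (ord X Θ) where
  total a b := by
    cases a with
    | inr θ => left; exact ord_inr θ b
    | inl x =>
      cases b with
      | inr θ => right; exact ord_inr θ _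
      | inl y => rcases le_total x y with h | h
                 · left; exact h
                 · right; exact h

instance : IsTrans (X ⊕ Θ) (ord X Θ) where
  trans a b c hab hbc := by
    cases a with
    | inr θ => exact ord_inr θ c
    | inl x =>
      cases b with
      | inr θ => exact absurd hab (ord_inl_inr x θ)
      | inl y =>
        cases c with
        | inr θ' => exact absurd hbc (ord_inl_inr y θ')
        | inl z => exact le_trans (α := X) hab hbc

-- ### small tetrads
lemma halfAddSelf (h2 : (2:k) ≠ 0) (x : FA k X Θ) : (1/2 : k) • (x + x) = x := by
  rw [← two_smul k x, smul_smul, one_div, inv_mul_cancel₀ h2, one_smul]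

lemma tetrad_nil (h2 : (2:k) ≠ 0) : tetrad k X Θ [] = 1 := by
  have h1 : wprod k X Θ [] = 1 := by
    rw [wprod]; exact map_one _
  rw [tetrad, List.reverse_nil, h1, halfAddSelf h2]

lemma tetrad_singleton (h2 : (2:k) ≠ 0) (g : X ⊕ Θ) :
    tetrad k X Θ [g] = wprod k X Θ [g] := by
  rw [tetrad, List.reverse_singleton, halfAddSelf h2]

lemma bullet_wprod_pair (g h' : X ⊕ Θ) (hh : degL [h'] = 0) :
    bullet k X Θ (wprod k X Θ [g]) (wprod k X Θ [h']) = tetrad k X Θ [g, h'] := by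
  rw [bullet, evenPart_wprod hh, ← wprod_append, ← wprod_append, tetrad]
  rfl

-- ### sorted four-letter tetrads are generators
lemma sorted_four_mem (l : List (X ⊕ Θ)) (hlen : l.length = 4)
    (hsort : l.Pairwise (ord X Θ)) (hnd : l.Nodup) (hdeg : degL l ≤ 1) :
    tetrad k X Θ l ∈ Gsub k X Θ := by
  rcases l with _|⟨a₁,_|⟨a₂,_|⟨a₃,_|⟨a₄,rest⟩⟩⟩⟩ <;> simp only [List.length_cons,
    List.length_nil] at hlen <;> try omega
  have hrest : rest = [] := by
    cases rest
    · rfl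
    · simp at hlen
  subst hrest
  simp only [List.pairwise_cons, List.mem_cons, List.mem_singleton, List.not_mem_nil,
    forall_eq_or_imp, forall_eq, or_false, false_or,
    List.Pairwise.nil, List.pairwise_singleton, and_true, true_and] at hsort
  simp only [List.nodup_cons, List.mem_cons, List.mem_singleton, List.not_mem_nil,
    not_or, or_false, false_or, List.nodup_nil, and_true, true_and] at hnd
  obtain ⟨⟨h12, h13, h14⟩, ⟨h23, h24⟩, h34⟩ := hsort
  obtain ⟨⟨ne12, ne13, ne14⟩, ⟨ne23, ne24⟩, ne34⟩ := hnd
  cases a₁ with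
  | inr θ =>
    -- the remaining three letters must be even
    cases a₂ with
    | inr θ₂ => simp [degL, List.filter_cons] at hdeg
    | inl x₂ =>
    cases a₃ with
    | inr θ₃ => simp [degL, List.filter_cons] at hdeg
    | inl x₃ =>
    cases a₄ with
    | inr θ₄ => simp [degL, List.filter_cons] at hdeg
    | inl x₄ =>
    have l23 : x₂ < x₃ := lt_of_le_of_ne ((ord_inl_inl x₂ x₃).mp h23) (by
      intro e; exact ne23 (by rw [e]))
    have l34 : x₃ < x₄ := lt_of_le_of_ne ((ord_inl_inl x₃ x₄).mp h34.1) (by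
      intro e; exact ne34.1 (by rw [e]))
    exact GJC.oddTetrad θ x₂ x₃ x₄ l23 l34
  | inl x₁ =>
    cases a₂ with
    | inr θ₂ => exact absurd h12 (ord_inl_inr x₁ θ₂)
    | inl x₂ =>
    cases a₃ with
    | inr θ₃ => exact absurd h23 (ord_inl_inr x₂ θ₃)
    | inl x₃ =>
    cases a₄ with
    | inr θ₄ => exact absurd h34.1 (ord_inl_inr x₃ θ₄)
    | inl x₄ =>
    have l12 : x₁ < x₂ := lt_of_le_of_ne ((ord_inl_inl x₁ x₂).mp h12) (by
      intro e; exact ne12 (by rw [e]))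
    have l23 : x₂ < x₃ := lt_of_le_of_ne ((ord_inl_inl x₂ x₃).mp h23) (by
      intro e; exact ne23 (by rw [e]))
    have l34 : x₃ < x₄ := lt_of_le_of_ne ((ord_inl_inl x₃ x₄).mp h34.1) (by
      intro e; exact ne34.1 (by rw [e]))
    exact GJC.evenTetrad x₁ x₂ x₃ x₄ l12 l23 l34

/-- every tetrad lies in the generated subalgebra -/
theorem tetrad_mem (h2 : (2:k) ≠ 0) (l₀ : List (X ⊕ Θ)) :
    tetrad k X Θ l₀ ∈ Gsub k X Θ := by
  classical
  suffices H : ∀ n (l : List (X ⊕ Θ)), l.length = n → tetrad k X Θ l ∈ Gsub k X Θ from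
    H _ l₀ rfl
  intro n
  induction n using Nat.strong_induction_on with
  | _ n IH =>
  intro l hl
  have IH' : ∀ l' : List (X ⊕ Θ), l'.length < n → tetrad k X Θ l' ∈ Gsub k X Θ :=
    fun l' h => IH _ h l' rfl
  rcases Nat.lt_or_ge n 3 with hsmall | h3
  · -- n = 0, 1, 2
    interval_cases n
    · -- n = 0
      have : l = [] := List.length_eq_zero_iff.mp hl
      subst this
      rw [tetrad_nil h2]
      exact GJC.one
    · -- n = 1
      obtain ⟨g, rfl⟩ := List.length_eq_one_iff.mp hl
      rw [tetrad_singleton h2]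
      exact GJC.gen g
    · -- n = 2
      rcases l with _|⟨g,_|⟨h',_|⟨w,rest⟩⟩⟩ <;> simp only [List.length_cons,
        List.length_nil] at hl <;> try omega
      cases h' with
      | inl x =>
        rw [← bullet_wprod_pair g (.inl x) (by simp [degL])]
        exact GJC.bullet (GJC.gen g) (GJC.gen _)
      | inr θ =>
        cases g with
        | inl x =>
          have : tetrad k X Θ [Sum.inl x, Sum.inr θ] = tetrad k X Θ [Sum.inr θ, Sum.inl x] := by
            rw [← tetrad_reverse [Sum.inr θ, Sum.inl x]]
            rfl
          rw [this, ← bullet_wprod_pair (.inr θ) (.inl x) (by simp [degL])]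
          exact GJC.bullet (GJC.gen _) (GJC.gen _)
        | inr θ' =>
          exact Itheta_le_Gsub (tetrad_mem_Itheta (by simp [degL, List.filter_cons]))
  · -- n ≥ 3 : quotient machinery
    set s : List (X ⊕ Θ) → (FA k X Θ ⧸ Gsub k X Θ) :=
      fun l' => (Gsub k X Θ).mkQ (tetrad k X Θ l') with hsdef
    have hsym : ∀ l' : List (X ⊕ Θ), s l'.reverse = s l' := fun l' =>
      congrArg ((Gsub k X Θ).mkQ) (tetrad_reverse l')
    have hrel : ∀ u v : List (X ⊕ Θ), u ≠ [] → v ≠ [] → u.length + v.length = n →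
        s (u++v) + s (u.reverse++v) + s (u++v.reverse) + s (u.reverse++v.reverse) = 0 := by
      intro u v hu hv hlen
      have hmem := tetrad_rel h2 n IH' u v hu hv hlen
      have : (Gsub k X Θ).mkQ (tetrad k X Θ (u++v) + tetrad k X Θ (u.reverse++v)
          + tetrad k X Θ (u++v.reverse) + tetrad k X Θ (u.reverse++v.reverse)) = 0 := by
        rwa [Submodule.mkQ_apply, Submodule.Quotient.mk_eq_zero]
      simpa [map_add, hsdef] using this
    have hzero : s l = 0 → tetrad k X Θ l ∈ Gsub k X Θ := by
      intro h
      exact (Submodule.Quotient.mk_eq_zero _).mp h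
    by_cases hodd : n % 2 = 1
    · exact hzero (sodd h2 h3 s hsym hrel hodd l hl)
    by_cases hm2 : n % 4 = 2
    · exact hzero (smod2 h2 h3 s hsym hrel hm2 l hl)
    have hm0 : n % 4 = 0 := by omega
    by_cases h8 : 8 ≤ n
    · exact hzero (smod0 h2 h3 s hsym hrel hm0 h8 l hl)
    have hn4 : n = 4 := by omega
    subst hn4
    -- n = 4
    by_cases hdeg : 2 ≤ degL l
    · exact Itheta_le_Gsub (tetrad_mem_Itheta hdeg)
    push_neg at hdeg
    by_cases hnd : l.Nodup
    · -- sorted reduction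
      set l' := List.insertionSort (ord X Θ) l with hl'
      have hperm : l.Perm l' := (List.perm_insertionSort _ l).symm
      have hsort : l'.Pairwise (ord X Θ) := List.pairwise_insertionSort _ l
      have hlen' : l'.length = 4 := by rw [← hperm.length_eq, hl]
      have hnd' : l'.Nodup := hperm.nodup_iff.mp hnd
      have hdeg' : degL l' ≤ 1 := by
        have : degL l' = degL l := by
          unfold degL
          rw [(hperm.filter _).length_eq]
        omega
      have hG' : tetrad k X Θ l' ∈ Gsub k X Θ :=
        sorted_four_mem l' hlen' hsort hnd' hdeg'
      have hz' : s l' = 0 := by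
        show (Gsub k X Θ).mkQ (tetrad k X Θ l') = 0
        rw [Submodule.mkQ_apply, Submodule.Quotient.mk_eq_zero]
        exact hG'
      have hpm := sperm h2 h3 s hsym hrel l l' hperm [] (by simpa using hl)
      simp only [List.nil_append] at hpm
      rcases hpm with e | e
      · exact hzero (by rw [e, hz'])
      · exact hzero (by rw [e, hz', neg_zero])
    · -- duplicate letter
      obtain ⟨a, t, p⟩ := exists_perm_dup hnd
      have hlen2 : (a::a::t).length = 4 := by rw [← p.length_eq, hl]
      have hz : s (a::a::t) = 0 := by
        have hsw := sswap h2 h3 s hsym hrel [] a a t (by simpa using hlen2)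
        simp only [List.nil_append] at hsw
        have : s (a::a::t) + s (a::a::t) = 0 := by nth_rewrite 2 [hsw]; simp
        exact kill_two h2 _ this
      have hpm := sperm h2 h3 s hsym hrel l (a::a::t) p [] (by simpa using hl)
      simp only [List.nil_append] at hpm
      rcases hpm with e | e
      · exact hzero (by rw [e, hz])
      · exact hzero (by rw [e, hz, neg_zero])

lemma evenPart_sub (f g : FA k X Θ) :
    evenPart k X Θ (f - g) = evenPart k X Θ f - evenPart k X Θ g := by
  ext w
  rw [evenPart_apply]
  simp only [MonoidAlgebra.coeff_sub, Finsupp.sub_apply]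
  rw [evenPart_apply, evenPart_apply]
  split <;> simp

lemma rev_wprod_single (g : X ⊕ Θ) : rev k X Θ (wprod k X Θ [g]) = wprod k X Θ [g] := by
  rw [wprod, MonoidAlgebra.of_apply]
  show rev k X Θ (MonoidAlgebra.single _ (1:k)) = _
  rw [rev_single]
  congr 1

/-- forward closure: every element of the subalgebra is symmetric mod I_Θ -/
lemma gjc_symmetric {a : FA k X Θ} (h : GJC k X Θ a) :
    rev k X Θ a - a ∈ Itheta k X Θ := by
  induction h with
  | ideal h => exact Submodule.sub_mem _ (rev_mem_Itheta h) h
  | one => rw [rev_one, sub_self]; exact zero_mem _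
  | gen g => rw [rev_wprod_single, sub_self]; exact zero_mem _
  | evenTetrad x₁ x₂ x₃ x₄ h₁₂ h₂₃ h₃₄ => rw [rev_tetrad, sub_self]; exact zero_mem _
  | oddTetrad θ x₁ x₂ x₃ h₁₂ h₂₃ => rw [rev_tetrad, sub_self]; exact zero_mem _
  | add ha hb iha ihb =>
    rename_i x y
    rw [rev_add, show rev k X Θ x + rev k X Θ y - (x + y)
      = (rev k X Θ x - x) + (rev k X Θ y - y) by abel]
    exact Submodule.add_mem _ iha ihb
  | smul c ha iha =>
    rename_i x
    rw [rev_smul, ← smul_sub]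
    exact Submodule.smul_mem _ _ iha
  | bullet ha hb iha ihb =>
    rename_i x y
    have hEb : evenPart k X Θ (rev k X Θ y) = evenPart k X Θ y := by
      have h0 : evenPart k X Θ (rev k X Θ y - y) = 0 := evenPart_of_mem_Itheta ihb
      rw [evenPart_sub] at h0
      exact sub_eq_zero.mp h0
    have hrb : rev k X Θ (bullet k X Θ x y)
        = (1/2:k) • (evenPart k X Θ y * rev k X Θ x + rev k X Θ x * evenPart k X Θ y) := by
      rw [bullet, rev_smul, rev_add, rev_mul, rev_mul, ← evenPart_rev, hEb, add_comm]
    have hdiff : rev k X Θ (bullet k X Θ x y) - bullet k X Θ x y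
        = (1/2:k) • (evenPart k X Θ y * (rev k X Θ x - x)
            + (rev k X Θ x - x) * evenPart k X Θ y) := by
      rw [hrb, bullet, ← smul_sub]
      congr 1
      rw [mul_sub, sub_mul]
      abel
    rw [hdiff]
    exact Submodule.smul_mem _ _ (Submodule.add_mem _
      (Itheta_mul_left _ iha) (Itheta_mul_right _ iha))

/-- backward direction: every symmetric element lies in the subalgebra -/
lemma symmetric_gjc (h2 : (2:k) ≠ 0) {a : FA k X Θ}
    (hsym : rev k X Θ a - a ∈ Itheta k X Θ) : GJC k X Θ a := by
  classical
  have hcoef : ∀ w : FreeMonoid (X ⊕ Θ), degTheta X Θ w ≤ 1 →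
      a.coeff (FreeMonoid.ofList (FreeMonoid.toList w).reverse) = a.coeff w := by
    intro w hw
    have := mem_Itheta_iff.mp hsym w hw
    rw [MonoidAlgebra.coeff_sub, Finsupp.sub_apply, rev_apply, sub_eq_zero] at this
    exact this
  set f₁ : FA k X Θ :=
    MonoidAlgebra.ofCoeff (Finsupp.filter (fun w => degTheta X Θ w ≤ 1) a.coeff) with hf₁
  have hrest : a - f₁ ∈ Itheta k X Θ := by
    rw [mem_Itheta_iff]
    intro w hw
    rw [MonoidAlgebra.coeff_sub, Finsupp.sub_apply, hf₁, MonoidAlgebra.coeff_ofCoeff,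
      Finsupp.filter_apply, if_pos hw, sub_self]
  have hrevf₁ : rev k X Θ f₁ = f₁ := by
    ext w
    rw [rev_apply, hf₁, MonoidAlgebra.coeff_ofCoeff, Finsupp.filter_apply, Finsupp.filter_apply,
      degTheta_reverse]
    split
    · rename_i hdw; exact hcoef w hdw
    · rfl
  have hentry : ∀ w : FreeMonoid (X ⊕ Θ), ∀ c : k,
      c • tetrad k X Θ (FreeMonoid.toList w)
        = (1/2:k) • MonoidAlgebra.single w c
          + (1/2:k) • MonoidAlgebra.single (FreeMonoid.ofList (FreeMonoid.toList w).reverse) c := by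
    intro w c
    rw [tetrad]
    have e1 : wprod k X Θ (FreeMonoid.toList w) = MonoidAlgebra.single w (1:k) := by
      rw [wprod, FreeMonoid.ofList_toList, MonoidAlgebra.of_apply]
    have e2 : wprod k X Θ (FreeMonoid.toList w).reverse
        = MonoidAlgebra.single (FreeMonoid.ofList (FreeMonoid.toList w).reverse) (1:k) := by
      rw [wprod, MonoidAlgebra.of_apply]
    rw [e1, e2]
    simp only [smul_add, smul_smul, MonoidAlgebra.smul_single, smul_eq_mul, mul_one]
    simp only [mul_comm c (1/2:k)]
  have key : f₁ = f₁.coeff.sum (fun w c => c • tetrad k X Θ (FreeMonoid.toList w)) := by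
    have : f₁.coeff.sum (fun w c => c • tetrad k X Θ (FreeMonoid.toList w))
        = f₁.coeff.sum (fun w c => (1/2:k) • MonoidAlgebra.single w c)
          + f₁.coeff.sum (fun w c => (1/2:k) • MonoidAlgebra.single
              (FreeMonoid.ofList (FreeMonoid.toList w).reverse) c) := by
      rw [← Finsupp.sum_add]
      exact Finsupp.sum_congr (fun w _ => hentry w (f₁.coeff w))
    rw [this, ← Finsupp.smul_sum, ← Finsupp.smul_sum, MonoidAlgebra.sum_coeff_single]
    have : f₁.coeff.sum (fun w c => MonoidAlgebra.single
        (FreeMonoid.ofList (FreeMonoid.toList w).reverse) c) = rev k X Θ f₁ := by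
      rw [rev, Finsupp.mapDomain, MonoidAlgebra.ofCoeff_finsuppSum]; rfl
    rw [this, hrevf₁, ← smul_add, halfAddSelf h2]
  have hf₁mem : f₁ ∈ Gsub k X Θ := by
    rw [key]
    apply Submodule.finsuppSum_mem
    intro w _
    exact Submodule.smul_mem _ _ (tetrad_mem h2 _)
  have : a = f₁ + (a - f₁) := by abel
  rw [this]
  exact GJC.add hf₁mem (GJC.ideal hrest)

end

/-- Generalized Cohn's Theorem: in the free associative Z₂-algebra
FA₂[X ∪ Θ] = FA[X ∪ Θ]/I_Θ over a field of characteristic ≠ 2, 3, the generalized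
Jordan algebra of reversible elements (fixed points of the reversal involution, read
modulo I_Θ) coincides with the generalized Jordan subalgebra generated by 1, the
generators X ∪ Θ, and all even and odd tetrads. -/
theorem stmt_19 {k X Θ : Type*} [Field k] [LinearOrder X]
    (h2 : (2 : k) ≠ 0) (h3 : (3 : k) ≠ 0) :
    ∀ a : FA k X Θ, rev k X Θ a - a ∈ Itheta k X Θ ↔ GJC k X Θ a := by
  intro a
  constructor
  · exact fun h => symmetric_gjc h2 h
  · exact fun h => gjc_symmetric h
end
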